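/- Let K be a linearly closed differential field, and let A, B ∈ M_n(K[∂]) with B non-degenerate, satisfying A*B + B*A = 0 and ker A ∩ ker B = 0 in K^n. Then the subspace L_{A,B} = {(B(P), A(P)) : P ∈ K^n} ⊂ K^n ⊕ K^n is maximal isotropic: if G, H ∈ K^n satisfy A*(H) + B*(G) = 0, then there exists F ∈ K^n with G = A(F) and H = B(F). -/

import Mathlib

/-!
Evaluation makes `K` a left module over the operator ring `R`, and the division algorithm makes
`R` a left principal ideal ring. Over a linearly closed `K`, an operator without non-zero solutions
has order `0`, hence is a unit; column reduction then shows that `S = [A; B]`, whose kernel on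
`K^n` is `ker A ∩ ker B = 0`, has a left inverse `X = [X₁ X₂]`. Taking adjoints, `N = [B* A*]`
and `Θ = [X₂*; X₁*]` satisfy `N Θ = (X S)* = 1`, while `N S = 0` is the relation
`A*B + B*A = 0`. So `[X - X Θ N; N]` is a left inverse of the square matrix `[S Θ]`; a left
Noetherian ring is stably finite, so it is also a right inverse: `S (X - X Θ N) + Θ N = 1`.
Applied to `(G, H)`, which `N` kills, this gives `(G, H) = S F` with `F = (X - X Θ N) (G, H)`.
-/

/-- The ring of differential operators K[∂] over a differential field (K, d),
characterized abstractly. -/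
structure DiffOpRing (K : Type) [Field K] (d : K → K) (R : Type) [Ring R] where
  ι : K →+* R
  dop : R
  comm : ∀ a : K, dop * ι a = ι a * dop + ι (d a)
  repr : ∀ r : R, ∃! c : ℕ →₀ K, r = c.sum fun i a => ι a * dop ^ i

/-- The coefficients of a differential operator. -/
noncomputable def DiffOpRing.coeff {K : Type} [Field K] {d : K → K} {R : Type} [Ring R]
    (S : DiffOpRing K d R) (r : R) : ℕ →₀ K := (S.repr r).choose

/-- The action A(f) of a differential operator A = Σ a_i ∂^i on f ∈ K. -/
noncomputable def DiffOpRing.eval {K : Type} [Field K] {d : K → K} {R : Type} [Ring R]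
    (S : DiffOpRing K d R) (r : R) (f : K) : K :=
  (S.coeff r).sum fun i a => a * d^[i] f

/-- The formal adjoint of a differential operator: (Σ a_i ∂^i)* = Σ (-∂)^i ∘ a_i. -/
noncomputable def DiffOpRing.adj {K : Type} [Field K] {d : K → K} {R : Type} [Ring R]
    (S : DiffOpRing K d R) (r : R) : R :=
  (S.coeff r).sum fun i a => (-S.dop) ^ i * S.ι a

/-- The adjoint of a matrix differential operator: (A*)_{ij} = (A_{ji})*. -/
noncomputable def adjM {K : Type} [Field K] {d : K → K} {R : Type} [Ring R]
    (S : DiffOpRing K d R) {n : ℕ} (A : Matrix (Fin n) (Fin n) R) :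
    Matrix (Fin n) (Fin n) R :=
  Matrix.of fun i j => S.adj (A j i)

/-- The action of a matrix differential operator on K^n. -/
noncomputable def actM {K : Type} [Field K] {d : K → K} {R : Type} [Ring R]
    (S : DiffOpRing K d R) {n : ℕ} (A : Matrix (Fin n) (Fin n) R) (v : Fin n → K) :
    Fin n → K :=
  fun i => ∑ j, S.eval (A i j) (v j)

/-- A matrix differential operator is non-degenerate (non-zero Dieudonné determinant)
iff it has trivial right kernel over K[∂]. -/
def Nondeg {n : ℕ} {R : Type} [Ring R] (A : Matrix (Fin n) (Fin n) R) : Prop :=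
  ∀ X : Fin n → R, A.mulVec X = 0 → X = 0

section LinearCombination

variable {R M : Type*} [Ring R] [AddCommGroup M] [Module R M]

lemma Fintype.linearCombination_cons {n : ℕ} (a : M) (v : Fin n → M) (x : Fin (n + 1) → R) :
    Fintype.linearCombination R (Fin.cons a v : Fin (n + 1) → M) x
      = x 0 • a + Fintype.linearCombination R v (Fin.tail x) := by
  simp [Fintype.linearCombination_apply, Fin.sum_univ_succ, Fin.tail]

variable [IsPrincipalIdealRing R]

lemma Submodule.exists_mem_apply_zero_eq_one
    (hunit : ∀ g : R, (∀ u : M, g • u = 0 → u = 0) → IsUnit g) {n : ℕ}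
    {N : Submodule R (Fin (n + 1) → R)}
    (hN : ∀ v : Fin (n + 1) → M, N ≤ LinearMap.ker (Fintype.linearCombination R v) → v = 0) :
    ∃ x ∈ N, x 0 = 1 := by
  obtain ⟨g, hg⟩ := (IsPrincipalIdealRing.principal (N.map (LinearMap.proj 0))).principal
  have hg_unit : IsUnit g := hunit g fun u hu => by
    have hv := hN (Fin.cons u 0) fun x hx => by
      obtain ⟨q, hq⟩ := Submodule.mem_span_singleton.mp (hg ▸ Submodule.mem_map_of_mem hx)
      have hx0 : x 0 = q * g := by simpa using hq.symm
      rw [LinearMap.mem_ker, Fintype.linearCombination_cons, hx0, mul_smul, hu, smul_zero, zero_add]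
      simp [Fintype.linearCombination_apply]
    simpa using congr_fun hv 0
  obtain ⟨x, hx, hx0⟩ : (1 : R) ∈ N.map (LinearMap.proj 0) := by
    rw [hg, Submodule.mem_span_singleton]
    exact ⟨_, hg_unit.val_inv_mul⟩
  exact ⟨x, hx, hx0⟩

theorem Submodule.eq_top_of_forall_le_ker_linearCombination
    (hunit : ∀ g : R, (∀ u : M, g • u = 0 → u = 0) → IsUnit g) :
    ∀ {n : ℕ} (N : Submodule R (Fin n → R)),
      (∀ v : Fin n → M, N ≤ LinearMap.ker (Fintype.linearCombination R v) → v = 0) → N = ⊤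
  | 0, N, _ => Subsingleton.elim _ _
  | n + 1, N, hN => by
    obtain ⟨x₀, hx₀, hx₀0⟩ := Submodule.exists_mem_apply_zero_eq_one hunit hN
    let cons₀ : (Fin n → R) →ₗ[R] (Fin (n + 1) → R) :=
      (Fin.consLinearEquiv R fun _ => R).toLinearMap ∘ₗ LinearMap.inr R R _
    have cons₀_apply (y : Fin n → R) : cons₀ y = Fin.cons 0 y := rfl
    have hdecomp (x : Fin (n + 1) → R) :
        x = x 0 • x₀ + cons₀ (Fin.tail x - x 0 • Fin.tail x₀) := by
      ext i
      refine Fin.cases ?_ (fun i => ?_) i <;> simp [cons₀_apply, hx₀0, Fin.tail]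
    have hN' : N.comap cons₀ = ⊤ :=
      eq_top_of_forall_le_ker_linearCombination hunit _ fun v hv => by
        have hzero := hN (Fin.cons (-Fintype.linearCombination R v (Fin.tail x₀)) v) fun x hx => by
          have hz : Fin.tail x - x 0 • Fin.tail x₀ ∈ N.comap cons₀ := by
            rw [Submodule.mem_comap, eq_sub_of_add_eq' (hdecomp x).symm]
            exact N.sub_mem hx (N.smul_mem _ hx₀)
          rw [LinearMap.mem_ker, hdecomp x, map_add, map_smul, cons₀_apply,
            Fintype.linearCombination_cons, Fintype.linearCombination_cons, hx₀0, Fin.cons_zero,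
            Fin.tail_cons, one_smul, neg_add_cancel, smul_zero, zero_smul, zero_add, hv hz,
            add_zero]
        funext i
        simpa using congr_fun hzero i.succ
    refine eq_top_iff.mpr fun x _ => ?_
    rw [hdecomp x]
    exact N.add_mem (N.smul_mem _ hx₀) (hN' ▸ Submodule.mem_top : _ ∈ N.comap cons₀)

theorem Matrix.exists_mul_eq_one_of_forall_linearCombination
    (hunit : ∀ g : R, (∀ u : M, g • u = 0 → u = 0) → IsUnit g) {ι : Type*} [Fintype ι] {n : ℕ}
    (A : Matrix ι (Fin n) R)
    (hA : ∀ v : Fin n → M, (∀ i, Fintype.linearCombination R v (A i) = 0) → v = 0) :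
    ∃ X : Matrix (Fin n) ι R, X * A = 1 := by
  rw [← Matrix.vecMul_surjective_iff_exists_left_inverse, ← Matrix.coe_vecMulLinear,
    ← LinearMap.range_eq_top, range_vecMulLinear]
  refine Submodule.eq_top_of_forall_le_ker_linearCombination hunit _ fun v hv => hA v fun i => ?_
  exact hv (Submodule.subset_span ⟨i, rfl⟩)

end LinearCombination

namespace Matrix

variable {R M : Type*} [Ring R] [AddCommGroup M] [Module R M] {l m n : Type*} [Fintype m]
  [Fintype n]

def smulVec (A : Matrix l m R) (v : m → M) : l → M :=
  fun i => ∑ j, A i j • v j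

lemma add_smulVec (A B : Matrix l m R) (v : m → M) :
    (A + B).smulVec v = A.smulVec v + B.smulVec v := by
  ext i
  simp [smulVec, add_smul, Finset.sum_add_distrib]

lemma mul_smulVec (A : Matrix l m R) (B : Matrix m n R) (v : n → M) :
    (A * B).smulVec v = A.smulVec (B.smulVec v) := by
  ext i
  simp only [smulVec, mul_apply, Finset.sum_smul, Finset.smul_sum, mul_smul]
  exact Finset.sum_comm

lemma one_smulVec [DecidableEq m] (v : m → M) : (1 : Matrix m m R).smulVec v = v := by
  ext i
  simp [smulVec, one_apply]

lemma smulVec_zero (A : Matrix l m R) : A.smulVec (0 : m → M) = 0 := by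
  ext i
  simp [smulVec]

lemma fromRows_smulVec {l₁ l₂ : Type*} (A₁ : Matrix l₁ m R) (A₂ : Matrix l₂ m R) (v : m → M) :
    (fromRows A₁ A₂).smulVec v = Sum.elim (A₁.smulVec v) (A₂.smulVec v) := by
  ext (i | i) <;> rfl

lemma fromCols_smulVec (A₁ : Matrix l m R) (A₂ : Matrix l n R) (v₁ : m → M) (v₂ : n → M) :
    (fromCols A₁ A₂).smulVec (Sum.elim v₁ v₂) = A₁.smulVec v₁ + A₂.smulVec v₂ := by
  ext i
  simp [smulVec, Fintype.sum_sum_type]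

/-- Columns `S`, `Θ` and rows `X`, `N` with `X * S = 1`, `N * S = 0` and `N * Θ = 1` make the
block matrices `[S Θ]` and `[X - X Θ N; N]` inverse to each other; over a stably finite ring this
also holds in the other order. -/
theorem mul_sub_add_mul_eq_one [DecidableEq m] [DecidableEq n] [IsStablyFiniteRing R]
    {S : Matrix (m ⊕ n) m R} {Θ : Matrix (m ⊕ n) n R} {X : Matrix m (m ⊕ n) R}
    {N : Matrix n (m ⊕ n) R} (hXS : X * S = 1) (hNS : N * S = 0) (hNΘ : N * Θ = 1) :
    S * (X - X * Θ * N) + Θ * N = 1 := by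
  have h : fromRows (X - X * Θ * N) N * fromCols S Θ = 1 := by
    rw [fromRows_mul_fromCols, Matrix.sub_mul, Matrix.sub_mul, Matrix.mul_assoc _ N S,
      Matrix.mul_assoc _ N Θ, hXS, hNS, hNΘ, Matrix.mul_zero, sub_zero, Matrix.mul_one, sub_self,
      fromBlocks_one]
  rw [← fromCols_mul_fromRows, mul_eq_one_comm, h]

end Matrix

namespace DiffOpRing

variable {K : Type} [Field K] {d : K → K} {R : Type} [Ring R] (S : DiffOpRing K d R)

noncomputable def ofCoeff : (ℕ →₀ K) →+ R :=
  Finsupp.liftAddHom fun i => (AddMonoidHom.mulRight (S.dop ^ i)).comp S.ι.toAddMonoidHom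

lemma ofCoeff_apply (c : ℕ →₀ K) : S.ofCoeff c = c.sum fun i a => S.ι a * S.dop ^ i :=
  Finsupp.liftAddHom_apply _ _

@[simp] lemma ofCoeff_single (i : ℕ) (a : K) :
    S.ofCoeff (Finsupp.single i a) = S.ι a * S.dop ^ i :=
  Finsupp.liftAddHom_apply_single _ _ _

@[simp] lemma ofCoeff_coeff (r : R) : S.ofCoeff (S.coeff r) = r := by
  rw [ofCoeff_apply]
  exact (S.repr r).choose_spec.1.symm

@[simp] lemma coeff_ofCoeff (c : ℕ →₀ K) : S.coeff (S.ofCoeff c) = c :=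
  ((S.repr _).choose_spec.2 c (S.ofCoeff_apply c)).symm

noncomputable def coeffEquiv : R ≃+ (ℕ →₀ K) :=
  AddEquiv.symm
    { S.ofCoeff with
      invFun := S.coeff
      left_inv := S.coeff_ofCoeff
      right_inv := S.ofCoeff_coeff }

@[simp] lemma coeff_add (r s : R) : S.coeff (r + s) = S.coeff r + S.coeff s :=
  map_add S.coeffEquiv r s

@[simp] lemma coeff_zero : S.coeff 0 = 0 := map_zero S.coeffEquiv

@[simp] lemma coeff_sub (r s : R) : S.coeff (r - s) = S.coeff r - S.coeff s :=
  map_sub S.coeffEquiv r s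

@[simp] lemma coeff_eq_zero_iff {r : R} : S.coeff r = 0 ↔ r = 0 :=
  map_eq_zero_iff S.coeffEquiv S.coeffEquiv.injective

lemma coeff_one : S.coeff 1 = Finsupp.single 0 1 := by
  rw [← S.coeff_ofCoeff (Finsupp.single 0 1), ofCoeff_single, map_one, pow_zero, mul_one]

lemma ofCoeff_smul (a : K) (c : ℕ →₀ K) : S.ofCoeff (a • c) = S.ι a * S.ofCoeff c := by
  induction c using Finsupp.induction_linear with
  | zero => simp
  | add c c' hc hc' => rw [smul_add, map_add, map_add, hc, hc', mul_add]
  | single i b => rw [Finsupp.smul_single, ofCoeff_single, ofCoeff_single, smul_eq_mul,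
      map_mul, mul_assoc]

lemma coeff_ι_mul (a : K) (r : R) : S.coeff (S.ι a * r) = a • S.coeff r := by
  rw [← S.coeff_ofCoeff (a • _), ofCoeff_smul, ofCoeff_coeff]

lemma dop_mul_ofCoeff (hd_add : ∀ a b : K, d (a + b) = d a + d b) (c : ℕ →₀ K) :
    S.dop * S.ofCoeff c = S.ofCoeff (c.mapDomain Nat.succ
      + Finsupp.mapRange.addMonoidHom (AddMonoidHom.mk' d hd_add) c) := by
  induction c using Finsupp.induction_linear with
  | zero => simp
  | add c c' hc hc' => rw [map_add, mul_add, hc, hc', ← map_add, Finsupp.mapDomain_add,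
      map_add (Finsupp.mapRange.addMonoidHom _), add_add_add_comm]
  | single i b =>
    simp only [Finsupp.mapDomain_single, Finsupp.mapRange.addMonoidHom_apply,
      AddMonoidHom.mk'_apply, Finsupp.mapRange_single, map_add, ofCoeff_single]
    rw [← mul_assoc, S.comm, add_mul, pow_succ', mul_assoc]

lemma coeff_dop_mul (hd_add : ∀ a b : K, d (a + b) = d a + d b) (r : R) :
    S.coeff (S.dop * r) = (S.coeff r).mapDomain Nat.succ
      + Finsupp.mapRange.addMonoidHom (AddMonoidHom.mk' d hd_add) (S.coeff r) := by
  conv_lhs => rw [← S.ofCoeff_coeff r, S.dop_mul_ofCoeff hd_add, coeff_ofCoeff]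

lemma coeff_dop_mul_succ (hd_add : ∀ a b : K, d (a + b) = d a + d b) (r : R) (i : ℕ) :
    S.coeff (S.dop * r) (i + 1) = S.coeff r i + d (S.coeff r (i + 1)) := by
  simp [S.coeff_dop_mul hd_add, Finsupp.mapDomain_apply Nat.succ_injective]

theorem induction_on {p : R → Prop} (r : R) (one : p 1)
    (add : ∀ r s, p r → p s → p (r + s)) (ι_mul : ∀ a r, p r → p (S.ι a * r))
    (dop_mul : ∀ r, p r → p (S.dop * r)) : p r := by
  have dop_pow : ∀ i, p (S.dop ^ i) := fun i => by
    induction i with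
    | zero => simpa using one
    | succ i ih => simpa [pow_succ'] using dop_mul _ ih
  rw [← S.ofCoeff_coeff r]
  induction S.coeff r using Finsupp.induction_linear with
  | zero => simpa using ι_mul 0 1 one
  | add c c' hc hc' => simpa using add _ _ hc hc'
  | single i a => simpa using ι_mul a _ (dop_pow i)

lemma eval_add (r s : R) (f : K) : S.eval (r + s) f = S.eval r f + S.eval s f := by
  simp only [DiffOpRing.eval, coeff_add]
  exact Finsupp.sum_add_index' (fun _ => zero_mul _) (fun _ _ _ => add_mul _ _ _)

lemma eval_zero (f : K) : S.eval 0 f = 0 := by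
  simp [DiffOpRing.eval]

lemma eval_one (f : K) : S.eval 1 f = f := by
  simp [DiffOpRing.eval, coeff_one]

lemma eval_add_right (hd_add : ∀ a b : K, d (a + b) = d a + d b) (r : R) (f g : K) :
    S.eval r (f + g) = S.eval r f + S.eval r g := by
  have iterate_add i : d^[i] (f + g) = d^[i] f + d^[i] g := Function.Semiconj₂.iterate hd_add i f g
  simp only [DiffOpRing.eval, iterate_add, mul_add, Finsupp.sum_add]

lemma eval_ι_mul (a : K) (r : R) (f : K) : S.eval (S.ι a * r) f = a * S.eval r f := by
  simp only [DiffOpRing.eval, coeff_ι_mul, Finsupp.mul_sum, ← mul_assoc]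
  exact Finsupp.sum_smul_index fun _ => zero_mul _

lemma eval_dop_mul (hd_add : ∀ a b : K, d (a + b) = d a + d b)
    (hd_mul : ∀ a b : K, d (a * b) = a * d b + d a * b) (r : R) (f : K) :
    S.eval (S.dop * r) f = d (S.eval r f) := by
  rw [DiffOpRing.eval, coeff_dop_mul S hd_add,
    Finsupp.sum_add_index' (fun _ => zero_mul _) (fun _ _ _ => add_mul _ _ _),
    Finsupp.mapRange.addMonoidHom_apply, Finsupp.sum_mapRange_index (fun _ => zero_mul _),
    Finsupp.sum_mapDomain_index (fun _ => zero_mul _) (fun _ _ _ => add_mul _ _ _),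
    ← Finsupp.sum_add, DiffOpRing.eval]
  have d_sum : d ((S.coeff r).sum fun i a => a * d^[i] f)
      = (S.coeff r).sum fun i a => d (a * d^[i] f) :=
    map_finsuppSum (AddMonoidHom.mk' d hd_add) _ _
  simp [d_sum, hd_mul, Function.iterate_succ_apply']

lemma eval_mul (hd_add : ∀ a b : K, d (a + b) = d a + d b)
    (hd_mul : ∀ a b : K, d (a * b) = a * d b + d a * b) (r s : R) (f : K) :
    S.eval (r * s) f = S.eval r (S.eval s f) := by
  induction r using S.induction_on generalizing f with
  | one => rw [one_mul, eval_one]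
  | add r r' hr hr' => rw [add_mul, eval_add, eval_add, hr, hr']
  | ι_mul a r hr => rw [mul_assoc, eval_ι_mul, eval_ι_mul, hr]
  | dop_mul r hr => rw [mul_assoc, eval_dop_mul S hd_add hd_mul, eval_dop_mul S hd_add hd_mul, hr]

noncomputable def evalHom (hd_add : ∀ a b : K, d (a + b) = d a + d b)
    (hd_mul : ∀ a b : K, d (a * b) = a * d b + d a * b) : R →+* AddMonoid.End K where
  toFun r := AddMonoidHom.mk' (S.eval r) (S.eval_add_right hd_add r)
  map_one' := AddMonoidHom.ext S.eval_one
  map_mul' r s := AddMonoidHom.ext (S.eval_mul hd_add hd_mul r s)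
  map_zero' := AddMonoidHom.ext S.eval_zero
  map_add' r s := AddMonoidHom.ext (S.eval_add r s)

lemma adj_add (r s : R) : S.adj (r + s) = S.adj r + S.adj s := by
  simp only [DiffOpRing.adj, coeff_add]
  exact Finsupp.sum_add_index' (fun _ => by simp) (fun _ _ _ => by rw [map_add, mul_add])

lemma adj_zero : S.adj 0 = 0 := by
  simp [DiffOpRing.adj]

lemma adj_one : S.adj 1 = 1 := by
  simp [DiffOpRing.adj, coeff_one]

lemma adj_ι_mul (a : K) (r : R) : S.adj (S.ι a * r) = S.adj r * S.ι a := by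
  simp only [DiffOpRing.adj, coeff_ι_mul, Finsupp.sum_mul, mul_assoc, ← map_mul, mul_comm _ a]
  exact Finsupp.sum_smul_index fun _ => by simp

lemma adj_dop_mul (hd_add : ∀ a b : K, d (a + b) = d a + d b) (r : R) :
    S.adj (S.dop * r) = S.adj r * -S.dop := by
  have ι_mul_neg_dop (a : K) : S.ι a * -S.dop = -S.dop * S.ι a + S.ι (d a) := by
    rw [mul_neg, neg_mul, S.comm, neg_add, neg_add_cancel_right]
  rw [DiffOpRing.adj, coeff_dop_mul S hd_add,
    Finsupp.sum_add_index' (fun _ => by simp) (fun _ _ _ => by rw [map_add, mul_add]),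
    Finsupp.mapRange.addMonoidHom_apply, Finsupp.sum_mapRange_index (fun _ => by simp),
    Finsupp.sum_mapDomain_index (fun _ => by simp) (fun _ _ _ => by rw [map_add, mul_add]),
    ← Finsupp.sum_add, DiffOpRing.adj, Finsupp.sum_mul]
  simp only [Nat.succ_eq_add_one, pow_succ, mul_assoc, ι_mul_neg_dop, mul_add, Finsupp.sum_add,
    AddMonoidHom.mk'_apply]

lemma adj_mul (hd_add : ∀ a b : K, d (a + b) = d a + d b) (r s : R) :
    S.adj (r * s) = S.adj s * S.adj r := by
  induction r using S.induction_on with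
  | one => rw [one_mul, adj_one, mul_one]
  | add r r' hr hr' => rw [add_mul, adj_add, adj_add, hr, hr', mul_add]
  | ι_mul a r hr => rw [mul_assoc, adj_ι_mul, adj_ι_mul, hr, mul_assoc]
  | dop_mul r hr => rw [mul_assoc, adj_dop_mul S hd_add, adj_dop_mul S hd_add, hr, mul_assoc]

lemma adj_sum {ι : Type*} (s : Finset ι) (f : ι → R) :
    S.adj (∑ i ∈ s, f i) = ∑ i ∈ s, S.adj (f i) :=
  map_sum (AddMonoidHom.mk' S.adj S.adj_add) f s

lemma adjM_add {n : ℕ} (X Y : Matrix (Fin n) (Fin n) R) : adjM S (X + Y) = adjM S X + adjM S Y := by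
  ext i j
  exact S.adj_add _ _

lemma adjM_one {n : ℕ} : adjM S (1 : Matrix (Fin n) (Fin n) R) = 1 := by
  ext i j
  rcases eq_or_ne i j with rfl | hij
  · simp [adjM, adj_one]
  · simp [adjM, Matrix.one_apply_ne hij, Matrix.one_apply_ne hij.symm, adj_zero]

lemma adjM_mul (hd_add : ∀ a b : K, d (a + b) = d a + d b) {n : ℕ}
    (X Y : Matrix (Fin n) (Fin n) R) :
    adjM S (X * Y) = adjM S Y * adjM S X := by
  ext i j
  simp only [adjM, Matrix.of_apply, Matrix.mul_apply, adj_sum]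
  exact Finset.sum_congr rfl fun k _ => S.adj_mul hd_add _ _

noncomputable def natDeg (r : R) : ℕ := (S.coeff r).support.sup id

lemma coeff_eq_zero_of_natDeg_lt {r : R} {i : ℕ} (h : S.natDeg r < i) : S.coeff r i = 0 := by
  by_contra hi
  exact (Finset.le_sup (f := id) (Finsupp.mem_support_iff.mpr hi)).not_gt h

lemma coeff_natDeg_ne_zero {r : R} (hr : r ≠ 0) : S.coeff r (S.natDeg r) ≠ 0 := by
  have hne : (S.coeff r).support.Nonempty := by simpa using hr
  obtain ⟨i, hi, hmax⟩ := Finset.exists_mem_eq_sup _ hne id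
  rw [natDeg, hmax]
  exact Finsupp.mem_support_iff.mp hi

lemma natDeg_lt_of_coeff_eq_zero {r : R} (hr : r ≠ 0) {m : ℕ}
    (h : ∀ i, m ≤ i → S.coeff r i = 0) : S.natDeg r < m := by
  by_contra! hm
  exact S.coeff_natDeg_ne_zero hr (h _ hm)

lemma coeff_dop_pow_mul (hd_add : ∀ a b : K, d (a + b) = d a + d b) {r : R} {m : ℕ}
    (hr : ∀ i, m < i → S.coeff r i = 0) (k : ℕ) :
    S.coeff (S.dop ^ k * r) (m + k) = S.coeff r m ∧
      ∀ i, m + k < i → S.coeff (S.dop ^ k * r) i = 0 := by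
  induction k with
  | zero => simpa using hr
  | succ k ih =>
    have hd0 : d 0 = 0 := map_zero (AddMonoidHom.mk' d hd_add)
    rw [pow_succ', mul_assoc, ← add_assoc]
    constructor
    · rw [S.coeff_dop_mul_succ hd_add, ih.2 (m + k + 1) (by omega), hd0, add_zero, ih.1]
    rintro (_ | i) hi
    · omega
    rw [S.coeff_dop_mul_succ hd_add, ih.2 i (by omega), ih.2 (i + 1) (by omega), hd0, add_zero]

lemma exists_coeff_sub_mul_eq_zero (hd_add : ∀ a b : K, d (a + b) = d a + d b) {a b : R}
    (hb : b ≠ 0) (hab : S.natDeg b ≤ S.natDeg a) :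
    ∃ q, ∀ i, S.natDeg a ≤ i → S.coeff (a - q * b) i = 0 := by
  obtain ⟨htop, hzero⟩ :=
    S.coeff_dop_pow_mul hd_add (fun _ => S.coeff_eq_zero_of_natDeg_lt) (S.natDeg a - S.natDeg b)
  rw [Nat.add_sub_cancel' hab] at htop hzero
  refine ⟨S.ι (S.coeff a (S.natDeg a) / S.coeff b (S.natDeg b)) * S.dop ^ (S.natDeg a - S.natDeg b),
    fun i hi => ?_⟩
  rw [mul_assoc, coeff_sub, Finsupp.sub_apply, coeff_ι_mul, Finsupp.smul_apply, smul_eq_mul]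
  rcases hi.eq_or_lt with rfl | hi
  · rw [htop, div_mul_cancel₀ _ (S.coeff_natDeg_ne_zero hb), sub_self]
  · rw [hzero i hi, S.coeff_eq_zero_of_natDeg_lt hi, mul_zero, sub_zero]

theorem isPrincipalIdealRing (S : DiffOpRing K d R) (hd_add : ∀ a b : K, d (a + b) = d a + d b) :
    IsPrincipalIdealRing R := by
  refine ⟨fun I => ?_⟩
  rcases eq_or_ne I ⊥ with rfl | hI
  · exact bot_isPrincipal
  obtain ⟨g, ⟨hgI, hg⟩, hmin⟩ := (measure fun r => S.natDeg r).wf.has_min {g | g ∈ I ∧ g ≠ 0}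
    (Submodule.exists_mem_ne_zero_of_ne_bot hI)
  refine ⟨g, le_antisymm (fun f hf => ?_) ((Submodule.span_singleton_le_iff_mem _ _).mpr hgI)⟩
  induction hdeg : S.natDeg f using Nat.strong_induction_on generalizing f with
  | _ m ih =>
    rcases eq_or_ne f 0 with rfl | hf0
    · exact zero_mem _
    obtain ⟨q, hq⟩ := S.exists_coeff_sub_mul_eq_zero hd_add hg (not_lt.mp (hmin f ⟨hf, hf0⟩))
    have hr : f - q * g ∈ I := I.sub_mem hf (I.smul_mem q hgI)
    have hf_eq : f = (f - q * g) + q • g := by rw [smul_eq_mul, sub_add_cancel]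
    rw [hf_eq]
    refine add_mem ?_ (Submodule.smul_mem _ _ (Submodule.mem_span_singleton_self g))
    rcases eq_or_ne (f - q * g) 0 with h0 | h0
    · rw [h0]; exact zero_mem _
    · exact ih _ (hdeg ▸ S.natDeg_lt_of_coeff_eq_zero h0 hq) _ hr rfl

lemma isUnit_of_natDeg_eq_zero {r : R} (hr : r ≠ 0) (h : S.natDeg r = 0) : IsUnit r := by
  have hc : S.coeff r = Finsupp.single 0 (S.coeff r 0) := by
    ext (_ | i)
    · simp
    · simp [S.coeff_eq_zero_of_natDeg_lt (h ▸ Nat.succ_pos i)]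
  have h0 : S.coeff r 0 ≠ 0 := h ▸ S.coeff_natDeg_ne_zero hr
  rw [← S.ofCoeff_coeff r, hc, ofCoeff_single, pow_zero, mul_one]
  exact (isUnit_iff_ne_zero.mpr h0).map S.ι

lemma eval_eq_sum_range (r : R) (u : K) :
    S.eval r u = ∑ i ∈ Finset.range (S.natDeg r + 1), S.coeff r i * d^[i] u :=
  Finsupp.sum_of_support_subset _
    (fun _ hi => Finset.mem_range_succ_iff.mpr (Finset.le_sup (f := id) hi)) _
    (fun _ _ => zero_mul _)

lemma isUnit_of_eval_injective
    (hlc : ∀ m : ℕ, 1 ≤ m → ∀ a : Fin (m + 1) → K, a (Fin.last m) ≠ 0 →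
      ∃ u : K, u ≠ 0 ∧ (∑ i, a i * d^[(i : ℕ)] u) = 0)
    {r : R} (hinj : ∀ u, S.eval r u = 0 → u = 0) : IsUnit r := by
  have hr : r ≠ 0 := by
    rintro rfl
    exact one_ne_zero (hinj 1 (S.eval_zero 1))
  refine S.isUnit_of_natDeg_eq_zero hr (Nat.eq_zero_of_not_pos fun hdeg => ?_)
  obtain ⟨u, hu, hsum⟩ := hlc _ hdeg (fun i => S.coeff r i) (S.coeff_natDeg_ne_zero hr)
  refine hu (hinj u ?_)
  rw [eval_eq_sum_range, ← Fin.sum_univ_eq_sum_range (fun i => S.coeff r i * d^[i] u)]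
  exact hsum

end DiffOpRing

theorem stmt_17_general (K : Type) [Field K] (d : K → K)
    (hd_add : ∀ a b : K, d (a + b) = d a + d b)
    (hd_mul : ∀ a b : K, d (a * b) = a * d b + d a * b)
    (hlc : ∀ m : ℕ, 1 ≤ m → ∀ a : Fin (m + 1) → K, a (Fin.last m) ≠ 0 →
      ∃ u : K, u ≠ 0 ∧ (∑ i, a i * d^[(i : ℕ)] u) = 0)
    (R : Type) [Ring R] (S : DiffOpRing K d R)
    (n : ℕ) (A B : Matrix (Fin n) (Fin n) R)
    (hskew : adjM S A * B + adjM S B * A = 0)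
    (hker : ∀ v : Fin n → K, actM S A v = 0 → actM S B v = 0 → v = 0)
    (G H : Fin n → K)
    (hGH : actM S (adjM S A) H + actM S (adjM S B) G = 0) :
    ∃ F : Fin n → K, G = actM S A F ∧ H = actM S B F := by
  let _ : Module R K := Module.compHom K (S.evalHom hd_add hd_mul)
  have := S.isPrincipalIdealRing hd_add
  have actM_eq (M : Matrix (Fin n) (Fin n) R) (v : Fin n → K) : actM S M v = M.smulVec v := rfl
  obtain ⟨X, hX⟩ := Matrix.exists_mul_eq_one_of_forall_linearCombination (M := K)
    (fun g hg => S.isUnit_of_eval_injective hlc hg) (Matrix.fromRows A B)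
    fun v hv => hker v (funext fun i => hv (.inl i)) (funext fun i => hv (.inr i))
  set N := Matrix.fromCols (adjM S B) (adjM S A)
  set Θ := Matrix.fromRows (adjM S X.toCols₂) (adjM S X.toCols₁)
  have hNS : N * Matrix.fromRows A B = 0 := by
    rw [Matrix.fromCols_mul_fromRows, add_comm, hskew]
  have hNΘ : N * Θ = 1 := by
    rw [Matrix.fromCols_mul_fromRows, ← S.adjM_mul hd_add, ← S.adjM_mul hd_add, ← S.adjM_add,
      add_comm, ← Matrix.fromCols_mul_fromRows, Matrix.fromCols_toCols, hX, S.adjM_one]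
  set P := X - X * Θ * N
  have hsplit : Matrix.fromRows A B * P + Θ * N = 1 := Matrix.mul_sub_add_mul_eq_one hX hNS hNΘ
  set F := P.smulVec (Sum.elim G H)
  have hGH_eq : Sum.elim G H = (Matrix.fromRows A B).smulVec F := by
    calc Sum.elim G H = (Matrix.fromRows A B * P + Θ * N).smulVec (Sum.elim G H) := by
          rw [hsplit, Matrix.one_smulVec]
      _ = (Matrix.fromRows A B).smulVec F := by
          rw [Matrix.add_smulVec, Matrix.mul_smulVec, Matrix.mul_smulVec, Matrix.fromCols_smulVec,
            ← actM_eq, ← actM_eq, add_comm (actM S (adjM S B) G), hGH, Matrix.smulVec_zero,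
            add_zero]
  rw [Matrix.fromRows_smulVec] at hGH_eq
  exact ⟨F, funext fun i => congr_fun hGH_eq (.inl i), funext fun i => congr_fun hGH_eq (.inr i)⟩

/-- Let K be a linearly closed differential field and A, B ∈ M_n(K[∂])
with B non-degenerate, satisfying A*B + B*A = 0 and ker A ∩ ker B = 0 in K^n. Then the
subspace L_{A,B} = {(B(P), A(P))} ⊂ K^n ⊕ K^n is maximal isotropic: if G, H ∈ K^n
satisfy A*(H) + B*(G) = 0, then there exists F ∈ K^n with G = A(F) and H = B(F). -/
theorem stmt_17 (K : Type) [Field K] [CharZero K] (d : K → K)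
    (hd_add : ∀ a b : K, d (a + b) = d a + d b)
    (hd_mul : ∀ a b : K, d (a * b) = a * d b + d a * b)
    (hlc : ∀ m : ℕ, 1 ≤ m → ∀ a : Fin (m + 1) → K, a (Fin.last m) ≠ 0 →
      ∃ u : K, u ≠ 0 ∧ (∑ i, a i * d^[(i : ℕ)] u) = 0)
    (R : Type) [Ring R] (S : DiffOpRing K d R)
    (n : ℕ) (A B : Matrix (Fin n) (Fin n) R) (hB : Nondeg B)
    (hskew : adjM S A * B + adjM S B * A = 0)
    (hker : ∀ v : Fin n → K, actM S A v = 0 → actM S B v = 0 → v = 0)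
    (G H : Fin n → K)
    (hGH : actM S (adjM S A) H + actM S (adjM S B) G = 0) :
    ∃ F : Fin n → K, G = actM S A F ∧ H = actM S B F :=
  stmt_17_general K d hd_add hd_mul hlc R S n A B hskew hker G H hGH
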